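/- In the abstract Miconic model with features b (number of boarded passengers) and g (number of served passengers), the sketch with rules r1: ⟨⟩ → ⟨b?, g↑⟩ and r2: ⟨⟩ → ⟨b↑, g=⟩ is acyclic, given the domain invariant that g never decreases along subgoal transitions and b + g is bounded by twice the total number of passengers P and b is bounded by P. -/
import Mathlib


/-- The Miconic sketch with rules r1: g↑ and r2: b↑, g unchanged, is acyclic:
given b ≤ P, g ≤ P and g non-decreasing along steps, there is no infinite
chain of valuations (b, g). -/
theorem stmt10 (P : ℕ) :
    ¬ ∃ v : ℕ → ℕ × ℕ,
      (∀ i, (v i).1 ≤ P ∧ (v i).2 ≤ P) ∧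
      (∀ i, (v i).2 ≤ (v (i + 1)).2) ∧
      (∀ i, (v i).2 < (v (i + 1)).2 ∨
        ((v i).1 < (v (i + 1)).1 ∧ (v (i + 1)).2 = (v i).2)) := by
  rintro ⟨v, hb, _, hr⟩
  set f : ℕ → ℕ := fun i => (P + 1) * (v i).2 + (v i).1 with hf
  have hsm : StrictMono f := strictMono_nat_of_lt_succ (by
    intro i
    rcases hr i with h | ⟨h1, h2⟩
    · have hb1 := (hb i).1
      calc (P + 1) * (v i).2 + (v i).1 < (P + 1) * (v i).2 + (P + 1) := by omega
        _ = (P + 1) * ((v i).2 + 1) := by ring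
        _ ≤ (P + 1) * (v (i + 1)).2 := by
            exact Nat.mul_le_mul_left _ (by omega)
        _ ≤ f (i + 1) := Nat.le_add_right _ _
    · simp only [hf, h2]; omega)
  have h1 : (P + 1) * P + P + 1 ≤ f ((P + 1) * P + P + 1) := hsm.le_apply
  have h2 := (hb ((P + 1) * P + P + 1)).1
  have h3 := (hb ((P + 1) * P + P + 1)).2
  have : f ((P + 1) * P + P + 1) ≤ (P + 1) * P + P := by
    simp only [hf]
    have := Nat.mul_le_mul_left (P + 1) h3
    omega
  omega
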